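/- Correctness of the spawning automaton construction: for every LTL^FO sentence φ, the constructed spawning automaton A_φ satisfies L(A_φ) = L(φ), i.e., A_φ has an accepting run over a first-order temporal structure (𝔄̄, w) (with w an infinite trace of events) if and only if (𝔄̄, w) ⊨ φ. -/

import Mathlib

/-!
LTL^FO: a first-order temporal logic.  One-sorted signatures with function
symbols, uninterpreted predicate symbols (U-operators, interpreted via the
trace) and interpreted predicate symbols (I-operators), terms, formulae,
first-order temporal structures, and the satisfaction relation in which
quantifiers range over the actions of the current event.
-/

namespace LTLFO

/-- A (one-sorted) signature: function symbols `Func`, uninterpreted predicate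
symbols `UPred` and interpreted predicate symbols `IPred`, with their arities. -/
structure Sig : Type 1 where
  Func : Type
  arF : Func → ℕ
  UPred : Type
  arU : UPred → ℕ
  IPred : Type
  arI : IPred → ℕ

/-- Terms over a signature, built from variables (named by naturals) and
function symbols. -/
inductive Tm (s : Sig) : Type where
  | var (x : ℕ) : Tm s
  | func (f : s.Func) (args : Fin (s.arF f) → Tm s) : Tm s

/-- LTL^FO formulae:
`φ ::= ⊤ | p(t⃗) | r(t⃗) | ¬φ | φ∧φ | Xφ | φUφ | ∀(x₁,…,xₙ):p. φ`. -/
inductive FOForm (s : Sig) : Type where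
  | tt : FOForm s
  | uatom (p : s.UPred) (ts : Fin (s.arU p) → Tm s) : FOForm s
  | iatom (r : s.IPred) (ts : Fin (s.arI r) → Tm s) : FOForm s
  | neg (φ : FOForm s) : FOForm s
  | and (φ ψ : FOForm s) : FOForm s
  | next (φ : FOForm s) : FOForm s
  | until_ (φ ψ : FOForm s) : FOForm s
  | forall_ (p : s.UPred) (xs : Fin (s.arU p) → ℕ) (φ : FOForm s) : FOForm s

/-- An action `(p, d⃗)`: a U-operator together with a matching tuple of domain values. -/
abbrev Action (s : Sig) (D : Type) : Type := Σ p : s.UPred, (Fin (s.arU p) → D)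

variable {s : Sig} {D : Type}

/-- Evaluation of a term in a domain `D`, given an interpretation of the function
symbols and a valuation of the variables. -/
def Tm.eval (fI : (f : s.Func) → (Fin (s.arF f) → D) → D) (v : ℕ → D) : Tm s → D
  | .var x => v x
  | .func f a => fI f (fun k => Tm.eval fI v (a k))

/-- Update a valuation `v` by binding the variables `xs k` to the values `d k`
(i.e. `v ∪ {x₁ ↦ d₁, …, xₙ ↦ dₙ}`). -/
def updVec {n : ℕ} (v : ℕ → D) (xs : Fin n → ℕ) (d : Fin n → D) : ℕ → D :=
  fun x =>
    match (List.finRange n).find? (fun k => xs k == x) with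
    | some k => d k
    | none => v x

/-- An (infinite) first-order temporal structure `(𝔄̄, w)` over a fixed domain `D`:
a rigid interpretation of the function symbols, a per-position interpretation of
the I-operators, and a trace of events (finite sets of actions). -/
structure TStruct (s : Sig) (D : Type) : Type where
  funcI : (f : s.Func) → (Fin (s.arF f) → D) → D
  predI : ℕ → (r : s.IPred) → (Fin (s.arI r) → D) → Prop
  trace : ℕ → Set (Action s D)
  finEv : ∀ i, (trace i).Finite

/-- The satisfaction relation `(𝔄̄, w, v, i) ⊨ φ` (infinite-trace semantics).
Quantifiers range over the actions of the current event. -/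
def Sat (M : TStruct s D) : FOForm s → (ℕ → D) → ℕ → Prop
  | .tt, _, _ => True
  | .uatom p ts, v, i => (⟨p, fun k => Tm.eval M.funcI v (ts k)⟩ : Action s D) ∈ M.trace i
  | .iatom r ts, v, i => M.predI i r (fun k => Tm.eval M.funcI v (ts k))
  | .neg φ, v, i => ¬ Sat M φ v i
  | .and φ ψ, v, i => Sat M φ v i ∧ Sat M ψ v i
  | .next φ, v, i => Sat M φ v (i + 1)
  | .until_ φ ψ, v, i => ∃ k, i ≤ k ∧ Sat M ψ v k ∧ ∀ j, i ≤ j → j < k → Sat M φ v j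
  | .forall_ p xs φ, v, i =>
      ∀ d : Fin (s.arU p) → D, (⟨p, d⟩ : Action s D) ∈ M.trace i → Sat M φ (updVec v xs d) i

/-- The variables occurring in a term. -/
def Tm.vars : Tm s → Set ℕ
  | .var x => {x}
  | .func _ a => ⋃ k, Tm.vars (a k)

/-- The free variables of a formula. -/
def FOForm.fv : FOForm s → Set ℕ
  | .tt => ∅
  | .uatom _ ts => ⋃ k, Tm.vars (ts k)
  | .iatom _ ts => ⋃ k, Tm.vars (ts k)
  | .neg φ => FOForm.fv φ
  | .and φ ψ => FOForm.fv φ ∪ FOForm.fv ψ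
  | .next φ => FOForm.fv φ
  | .until_ φ ψ => FOForm.fv φ ∪ FOForm.fv ψ
  | .forall_ _ xs φ => FOForm.fv φ \ Set.range xs

/-- A sentence is a formula without free variables. -/
def FOForm.Closed (φ : FOForm s) : Prop := FOForm.fv φ = ∅

/-- An LTL^FO sentence is satisfiable iff some first-order temporal structure
(over some nonempty domain) satisfies it at position 0. -/
def FOSatisfiable (s : Sig) (φ : FOForm s) : Prop :=
  ∃ (D : Type) (_ : Nonempty D) (M : TStruct s D) (v : ℕ → D), Sat M φ v 0

end LTLFO

namespace LTLFO

variable {s : Sig} {D : Type}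

/-- The quantifier depth of a formula (the level of its spawning automaton). -/
def depthFO : FOForm s → ℕ
  | .tt => 0
  | .uatom _ _ => 0
  | .iatom _ _ => 0
  | .neg φ => depthFO φ
  | .and φ ψ => max (depthFO φ) (depthFO ψ)
  | .next φ => depthFO φ
  | .until_ φ ψ => max (depthFO φ) (depthFO ψ)
  | .forall_ _ _ φ => depthFO φ + 1

/-- The restricted subformula function `sf|∀`, treating quantified subformulae as
atomic. -/
def sfA : FOForm s → Set (FOForm s)
  | .tt => {.tt}
  | .uatom p ts => {.uatom p ts}
  | .iatom r ts => {.iatom r ts}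
  | .neg φ => insert (.neg φ) (sfA φ)
  | .and φ ψ => insert (.and φ ψ) (sfA φ ∪ sfA ψ)
  | .next φ => insert (.next φ) (sfA φ)
  | .until_ φ ψ => insert (.until_ φ ψ) (sfA φ ∪ sfA ψ)
  | .forall_ p xs φ => {.forall_ p xs φ}

/-- The closure `cl(φ)`: the smallest set containing `sf|∀(φ)` closed under negation. -/
def cl (φ : FOForm s) : Set (FOForm s) := sfA φ ∪ (FOForm.neg '' sfA φ)

/-- A complete subset of `cl(φ)` (a state of the spawning automaton `A_φ`). -/
def Complete (φ : FOForm s) (q : Set (FOForm s)) : Prop :=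
  q ⊆ cl φ ∧
  (∀ ψ ∈ sfA φ, (ψ ∈ q ∨ FOForm.neg ψ ∈ q) ∧ ¬ (ψ ∈ q ∧ FOForm.neg ψ ∈ q)) ∧
  (∀ ψ ψ', FOForm.and ψ ψ' ∈ cl φ → (FOForm.and ψ ψ' ∈ q ↔ (ψ ∈ q ∧ ψ' ∈ q))) ∧
  (∀ ψ ψ', FOForm.until_ ψ ψ' ∈ cl φ →
    ((FOForm.until_ ψ ψ' ∈ q → (ψ' ∈ q ∨ ψ ∈ q)) ∧
      (FOForm.until_ ψ ψ' ∉ q → ψ' ∉ q)))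

/-- Definedness condition of `δ→` at a state `q` on the `i`-th input `(𝔄ᵢ, wᵢ)`:
all (possibly negated) atomic formulae of `q` are (respectively not) true there. -/
def AtomsOK (M : TStruct s D) (v : ℕ → D) (i : ℕ) (q : Set (FOForm s)) : Prop :=
  (FOForm.neg FOForm.tt ∉ q) ∧
  (∀ p ts, FOForm.uatom p ts ∈ q →
    (⟨p, fun k => Tm.eval M.funcI v (ts k)⟩ : Action s D) ∈ M.trace i) ∧
  (∀ p ts, FOForm.neg (FOForm.uatom p ts) ∈ q →
    (⟨p, fun k => Tm.eval M.funcI v (ts k)⟩ : Action s D) ∉ M.trace i) ∧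
  (∀ r ts, FOForm.iatom r ts ∈ q → M.predI i r (fun k => Tm.eval M.funcI v (ts k))) ∧
  (∀ r ts, FOForm.neg (FOForm.iatom r ts) ∈ q →
    ¬ M.predI i r (fun k => Tm.eval M.funcI v (ts k)))

/-- The transition relation `q' ∈ δ→(q, (𝔄ᵢ, wᵢ))` of `A_{φ,v}`. -/
def Step (φ : FOForm s) (M : TStruct s D) (v : ℕ → D) (i : ℕ)
    (q q' : Set (FOForm s)) : Prop :=
  AtomsOK M v i q ∧
  (∀ ψ, FOForm.next ψ ∈ cl φ → (FOForm.next ψ ∈ q ↔ ψ ∈ q')) ∧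
  (∀ ψ ψ', FOForm.until_ ψ ψ' ∈ cl φ →
    (FOForm.until_ ψ ψ' ∈ q ↔ (ψ' ∈ q ∨ (ψ ∈ q ∧ FOForm.until_ ψ ψ' ∈ q'))))

/-- A run of `A_{φ,v}` over `(𝔄̄, w)`: a sequence of complete states starting in an
initial state (one containing `φ`) and respecting `δ→`. -/
def IsRun (φ : FOForm s) (M : TStruct s D) (v : ℕ → D) (ρ : ℕ → Set (FOForm s)) : Prop :=
  (∀ i, Complete φ (ρ i)) ∧ φ ∈ ρ 0 ∧ ∀ i, Step φ M v i (ρ i) (ρ (i + 1))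

/-- Local (generalized Büchi) acceptance: for each `ψUψ' ∈ cl(φ)`, the set
`F_{ψUψ'} = {q | ψ' ∈ q ∨ ¬(ψUψ') ∈ q}` is visited infinitely often. -/
def LocallyAccepting (φ : FOForm s) (ρ : ℕ → Set (FOForm s)) : Prop :=
  ∀ ψ ψ', FOForm.until_ ψ ψ' ∈ cl φ →
    ∀ N, ∃ i, N ≤ i ∧ (ψ' ∈ ρ i ∨ FOForm.neg (FOForm.until_ ψ ψ') ∈ ρ i)

/-- The suffix `(𝔄̄ⁱ, wⁱ)` of a first-order temporal structure. -/
def TStruct.shift (M : TStruct s D) (i : ℕ) : TStruct s D where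
  funcI := M.funcI
  predI := fun j => M.predI (i + j)
  trace := fun j => M.trace (i + j)
  finEv := fun j => M.finEv (i + j)

/-- Acceptance for spawning automata `A_{φ,v}` of level at most `n`, by recursion on
the level: a run is accepting if it is a locally accepting run and, at every position
`i`, the spawning obligation `δ↓(ρ(i), (𝔄ᵢ, wᵢ))` is satisfiable by a set of spawned
automata all of which have an accepting run over the suffix `(𝔄̄ⁱ, wⁱ)`:
for every `∀x⃗:p.ψ ∈ ρ(i)` and every action `(p, d⃗) ∈ wᵢ` the automaton
`A_{ψ, v∪{x⃗↦d⃗}}` must accept, and for every `¬∀x⃗:p.ψ ∈ ρ(i)` some action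
`(p, d⃗) ∈ wᵢ` must give an accepting `A_{¬ψ, v∪{x⃗↦d⃗}}`.  (At level `0` the
spawning function is constantly `⊤`.) -/
def AcceptingAux : ℕ → TStruct s D → FOForm s → (ℕ → D) → (ℕ → Set (FOForm s)) → Prop
  | 0, M, φ, v, ρ => IsRun φ M v ρ ∧ LocallyAccepting φ ρ
  | n + 1, M, φ, v, ρ =>
      IsRun φ M v ρ ∧ LocallyAccepting φ ρ ∧
      ∀ i : ℕ,
        (∀ p xs ψ, FOForm.forall_ p xs ψ ∈ ρ i →
          ∀ d : Fin (s.arU p) → D, (⟨p, d⟩ : Action s D) ∈ M.trace i →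
            ∃ ρ', AcceptingAux n (M.shift i) ψ (updVec v xs d) ρ') ∧
        (∀ p xs ψ, FOForm.neg (FOForm.forall_ p xs ψ) ∈ ρ i →
          ∃ d : Fin (s.arU p) → D, (⟨p, d⟩ : Action s D) ∈ M.trace i ∧
            ∃ ρ', AcceptingAux n (M.shift i) (FOForm.neg ψ) (updVec v xs d) ρ')

/-- `ρ` is an accepting run of the spawning automaton `A_{φ,v}` (whose level is the
quantifier depth of `φ`) over the first-order temporal structure `M = (𝔄̄, w)`. -/
def Accepting (M : TStruct s D) (φ : FOForm s) (v : ℕ → D)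
    (ρ : ℕ → Set (FOForm s)) : Prop :=
  AcceptingAux (depthFO φ) M φ v ρ

end LTLFO

namespace LTLFO

/-!
In a locally accepting run of `A_{φ,v}` whose quantified formulae (atoms for the
automaton) are true, every formula of `sf|∀(φ)` lies in state `i` iff it holds at position
`i`. This goes by induction on the formula; the only non-local case is `ψ U ψ'`, where the
transition relation gives the expansion law `ψ U ψ' ↔ ψ' ∨ (ψ ∧ X(ψ U ψ'))` and the Büchi
condition rules out every solution but the least one. Conversely, the sets of true formulae of
`cl(φ)` form such a run. Finally, by induction on the level, the spawned automata are
correct, so the spawning obligations of a run say exactly that its quantified formulae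
are true.
-/

variable {s : Sig} {D : Type}

theorem mem_sfA_self (φ : FOForm s) : φ ∈ sfA φ := by
  cases φ <;> simp [sfA]

theorem sfA_subset {φ ψ : FOForm s} (h : ψ ∈ sfA φ) : sfA ψ ⊆ sfA φ := by
  induction φ with
  | neg _ ih | next _ ih =>
    rcases h with rfl | h
    exacts [subset_rfl, (ih h).trans (Set.subset_insert _ _)]
  | and _ _ ih ih' | until_ _ _ ih ih' =>
    rcases h with rfl | h | h
    exacts [subset_rfl, (ih h).trans (Set.subset_union_left.trans (Set.subset_insert _ _)),
      (ih' h).trans (Set.subset_union_right.trans (Set.subset_insert _ _))]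
  | _ => rw [Set.mem_singleton_iff.1 h]

theorem depthFO_le_of_mem_sfA {φ ψ : FOForm s} (h : ψ ∈ sfA φ) :
    depthFO ψ ≤ depthFO φ := by
  induction φ with
  | neg _ ih | next _ ih =>
    rcases h with rfl | h
    exacts [le_rfl, ih h]
  | and _ _ ih ih' | until_ _ _ ih ih' =>
    rcases h with rfl | h | h
    exacts [le_rfl, (ih h).trans (le_max_left _ _), (ih' h).trans (le_max_right _ _)]
  | _ => rw [Set.mem_singleton_iff.1 h]

theorem depthFO_lt_of_forall_mem_sfA {φ χ : FOForm s} {p : s.UPred} {xs : Fin (s.arU p) → ℕ}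
    (h : FOForm.forall_ p xs χ ∈ sfA φ) : depthFO χ < depthFO φ :=
  depthFO_le_of_mem_sfA h

theorem mem_sfA_of_neg_mem {φ ψ : FOForm s} (h : FOForm.neg ψ ∈ sfA φ) : ψ ∈ sfA φ :=
  sfA_subset h (Set.mem_insert_of_mem _ (mem_sfA_self ψ))

theorem mem_sfA_of_next_mem {φ ψ : FOForm s} (h : FOForm.next ψ ∈ sfA φ) : ψ ∈ sfA φ :=
  sfA_subset h (Set.mem_insert_of_mem _ (mem_sfA_self ψ))

theorem mem_sfA_of_and_mem {φ ψ ψ' : FOForm s} (h : FOForm.and ψ ψ' ∈ sfA φ) :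
    ψ ∈ sfA φ ∧ ψ' ∈ sfA φ :=
  ⟨sfA_subset h (Or.inr (Or.inl (mem_sfA_self ψ))),
    sfA_subset h (Or.inr (Or.inr (mem_sfA_self ψ')))⟩

theorem mem_sfA_of_until_mem {φ ψ ψ' : FOForm s} (h : FOForm.until_ ψ ψ' ∈ sfA φ) :
    ψ ∈ sfA φ ∧ ψ' ∈ sfA φ :=
  ⟨sfA_subset h (Or.inr (Or.inl (mem_sfA_self ψ))),
    sfA_subset h (Or.inr (Or.inr (mem_sfA_self ψ')))⟩

theorem mem_cl_of_mem_sfA {φ ψ : FOForm s} (h : ψ ∈ sfA φ) : ψ ∈ cl φ := Or.inl h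

theorem neg_mem_cl {φ ψ : FOForm s} (h : ψ ∈ sfA φ) : FOForm.neg ψ ∈ cl φ :=
  Or.inr ⟨ψ, h, rfl⟩

theorem mem_sfA_of_mem_cl {φ ψ : FOForm s} (h : ψ ∈ cl φ)
    (hψ : ∀ χ, ψ ≠ FOForm.neg χ) : ψ ∈ sfA φ := by
  rcases h with h | ⟨χ, -, rfl⟩
  exacts [h, absurd rfl (hψ χ)]

theorem mem_sfA_of_neg_mem_cl {φ ψ : FOForm s} (h : FOForm.neg ψ ∈ cl φ) : ψ ∈ sfA φ := by
  rcases h with h | ⟨χ, hχ, ⟨⟩⟩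
  exacts [mem_sfA_of_neg_mem h, hχ]

section Until

variable {P Q U : ℕ → Prop}

theorem until_unfold (i : ℕ) :
    (∃ k, i ≤ k ∧ Q k ∧ ∀ j, i ≤ j → j < k → P j) ↔
      Q i ∨ (P i ∧ ∃ k, i + 1 ≤ k ∧ Q k ∧ ∀ j, i + 1 ≤ j → j < k → P j) := by
  constructor
  · rintro ⟨k, hik, hQ, hP⟩
    rcases hik.eq_or_lt with rfl | hlt
    · exact Or.inl hQ
    · exact Or.inr ⟨hP i le_rfl hlt, k, hlt, hQ, fun j hj => hP j (by omega)⟩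
  · rintro (hQ | ⟨hPi, k, hik, hQ, hP⟩)
    · exact ⟨i, le_rfl, hQ, fun j hj hji => absurd hji (by omega)⟩
    · refine ⟨k, by omega, hQ, fun j hj hjk => ?_⟩
      rcases hj.eq_or_lt with rfl | hlt
      exacts [hPi, hP j hlt hjk]

theorem until_iff_of_unfold (hU : ∀ i, U i ↔ Q i ∨ (P i ∧ U (i + 1)))
    (hinf : ∀ N, ∃ i, N ≤ i ∧ (Q i ∨ ¬ U i)) (i : ℕ) :
    U i ↔ ∃ k, i ≤ k ∧ Q k ∧ ∀ j, i ≤ j → j < k → P j := by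
  have reach : ∀ m i, U i → (Q (i + m) ∨ ¬ U (i + m)) →
      ∃ k, i ≤ k ∧ Q k ∧ ∀ j, i ≤ j → j < k → P j := by
    intro m
    induction m with
    | zero =>
      intro i hUi hend
      exact (until_unfold i).2 (Or.inl (hend.resolve_right (not_not.2 hUi)))
    | succ m ih =>
      intro i hUi hend
      refine (until_unfold i).2 (((hU i).1 hUi).imp_right fun ⟨hP, hU'⟩ =>
        ⟨hP, ih (i + 1) hU' ?_⟩)
      rwa [Nat.add_right_comm, Nat.add_assoc]
  have back : ∀ m i, Q (i + m) → (∀ j, i ≤ j → j < i + m → P j) → U i := by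
    intro m
    induction m with
    | zero => exact fun i hQ _ => (hU i).2 (Or.inl hQ)
    | succ m ih =>
      intro i hQ hP
      refine (hU i).2 (Or.inr ⟨hP i le_rfl (by omega),
        ih (i + 1) ?_ fun j hj hjk => hP j (by omega) (by omega)⟩)
      rwa [Nat.add_right_comm, Nat.add_assoc]
  constructor
  · intro hUi
    obtain ⟨N, hiN, hN⟩ := hinf i
    obtain ⟨m, rfl⟩ := Nat.exists_eq_add_of_le hiN
    exact reach m i hUi hN
  · rintro ⟨k, hik, hQ, hP⟩
    obtain ⟨m, rfl⟩ := Nat.exists_eq_add_of_le hik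
    exact back m i hQ hP

end Until

theorem sat_shift (M : TStruct s D) (i : ℕ) (ψ : FOForm s) (v : ℕ → D) (j : ℕ) :
    Sat (M.shift i) ψ v j ↔ Sat M ψ v (i + j) := by
  induction ψ generalizing v j with
  | neg _ ih => exact not_congr (ih v j)
  | and _ _ ih ih' => exact and_congr (ih v j) (ih' v j)
  | next _ ih => exact ih v (j + 1)
  | until_ _ _ ih ih' =>
    simp only [Sat, ih, ih']
    constructor
    · rintro ⟨k, hjk, hQ, hP⟩
      exact ⟨i + k, by omega, hQ, fun l hl hlk => by
        simpa [Nat.add_sub_cancel' (by omega : i ≤ l)] using hP (l - i) (by omega) (by omega)⟩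
    · rintro ⟨k, hjk, hQ, hP⟩
      refine ⟨k - i, by omega, by rwa [Nat.add_sub_cancel' (by omega)],
        fun l hl hlk => hP (i + l) (by omega) (by omega)⟩
  | forall_ _ _ _ ih => exact forall_congr' fun d => imp_congr_right fun _ => ih _ j
  | _ => exact Iff.rfl

theorem sat_shift_zero (M : TStruct s D) (i : ℕ) (ψ : FOForm s) (v : ℕ → D) :
    Sat (M.shift i) ψ v 0 ↔ Sat M ψ v i :=
  sat_shift M i ψ v 0

theorem Complete.neg_mem_iff {φ ψ : FOForm s} {q : Set (FOForm s)} (hq : Complete φ q)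
    (hψ : ψ ∈ sfA φ) : FOForm.neg ψ ∈ q ↔ ψ ∉ q := by
  obtain ⟨hor, hnand⟩ := hq.2.1 ψ hψ
  exact ⟨fun hn h => hnand ⟨h, hn⟩, hor.resolve_left⟩

theorem Complete.mem_iff_of_imp {φ ψ : FOForm s} {q : Set (FOForm s)} {P : Prop}
    (hq : Complete φ q) (hψ : ψ ∈ sfA φ) (hpos : ψ ∈ q → P)
    (hneg : FOForm.neg ψ ∈ q → ¬ P) : ψ ∈ q ↔ P :=
  ⟨hpos, fun hP => by_contra fun h => hneg ((hq.neg_mem_iff hψ).2 h) hP⟩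

def QuantifiersSound (M : TStruct s D) (v : ℕ → D) (ρ : ℕ → Set (FOForm s)) : Prop :=
  ∀ i, (∀ p xs χ, FOForm.forall_ p xs χ ∈ ρ i → Sat M (FOForm.forall_ p xs χ) v i) ∧
    (∀ p xs χ, FOForm.neg (FOForm.forall_ p xs χ) ∈ ρ i →
      ¬ Sat M (FOForm.forall_ p xs χ) v i)

section Soundness

variable {φ : FOForm s} {M : TStruct s D} {v : ℕ → D} {ρ : ℕ → Set (FOForm s)}

theorem IsRun.until_mem_iff (hrun : IsRun φ M v ρ) (hloc : LocallyAccepting φ ρ)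
    {ψ ψ' : FOForm s} (h : FOForm.until_ ψ ψ' ∈ sfA φ) (i : ℕ) :
    FOForm.until_ ψ ψ' ∈ ρ i ↔
      ∃ k, i ≤ k ∧ ψ' ∈ ρ k ∧ ∀ j, i ≤ j → j < k → ψ ∈ ρ j :=
  until_iff_of_unfold (fun j => (hrun.2.2 j).2.2 ψ ψ' (mem_cl_of_mem_sfA h))
    (fun N => (hloc ψ ψ' (mem_cl_of_mem_sfA h) N).imp fun j =>
      And.imp_right (Or.imp_right ((hrun.1 j).neg_mem_iff h).1)) i

theorem IsRun.mem_iff_sat (hrun : IsRun φ M v ρ) (hloc : LocallyAccepting φ ρ)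
    (hquant : QuantifiersSound M v ρ) {ψ : FOForm s} (hψ : ψ ∈ sfA φ) (i : ℕ) :
    ψ ∈ ρ i ↔ Sat M ψ v i := by
  have hcomplete := hrun.1
  have hstep := hrun.2.2
  induction ψ generalizing i with
  | tt =>
    exact (hcomplete i).mem_iff_of_imp hψ (fun _ => trivial) fun h _ => (hstep i).1.1 h
  | uatom p ts =>
    obtain ⟨-, hpos, hneg, -, -⟩ := (hstep i).1
    exact (hcomplete i).mem_iff_of_imp hψ (hpos p ts) (hneg p ts)
  | iatom r ts =>
    obtain ⟨-, -, -, hpos, hneg⟩ := (hstep i).1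
    exact (hcomplete i).mem_iff_of_imp hψ (hpos r ts) (hneg r ts)
  | neg χ ih =>
    have hχ := mem_sfA_of_neg_mem hψ
    exact ((hcomplete i).neg_mem_iff hχ).trans (not_congr (ih hχ i))
  | and χ χ' ih ih' =>
    obtain ⟨hχ, hχ'⟩ := mem_sfA_of_and_mem hψ
    exact ((hcomplete i).2.2.1 χ χ' (mem_cl_of_mem_sfA hψ)).trans
      (and_congr (ih hχ i) (ih' hχ' i))
  | next χ ih =>
    exact ((hstep i).2.1 χ (mem_cl_of_mem_sfA hψ)).trans
      (ih (mem_sfA_of_next_mem hψ) (i + 1))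
  | until_ χ χ' ih ih' =>
    obtain ⟨hχ, hχ'⟩ := mem_sfA_of_until_mem hψ
    rw [IsRun.until_mem_iff hrun hloc hψ i]
    simp only [Sat, ih hχ, ih' hχ']
  | forall_ p xs χ =>
    exact (hcomplete i).mem_iff_of_imp hψ ((hquant i).1 p xs χ) ((hquant i).2 p xs χ)

end Soundness

def satRun (M : TStruct s D) (φ : FOForm s) (v : ℕ → D) : ℕ → Set (FOForm s) :=
  fun i => {ψ | ψ ∈ cl φ ∧ Sat M ψ v i}

section CanonicalRun

variable {φ : FOForm s} {M : TStruct s D} {v : ℕ → D}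

theorem mem_satRun {ψ : FOForm s} (hψ : ψ ∈ sfA φ) (i : ℕ) :
    ψ ∈ satRun M φ v i ↔ Sat M ψ v i :=
  and_iff_right (mem_cl_of_mem_sfA hψ)

theorem neg_mem_satRun {ψ : FOForm s} (hψ : ψ ∈ sfA φ) (i : ℕ) :
    FOForm.neg ψ ∈ satRun M φ v i ↔ ¬ Sat M ψ v i :=
  and_iff_right (neg_mem_cl hψ)

theorem complete_satRun (i : ℕ) : Complete φ (satRun M φ v i) := by
  refine ⟨fun ψ hψ => hψ.1, fun ψ hψ => ?_, fun ψ ψ' h => ?_, fun ψ ψ' h => ?_⟩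
  · rw [mem_satRun hψ, neg_mem_satRun hψ]
    exact ⟨em _, fun h => h.2 h.1⟩
  · have h := mem_sfA_of_mem_cl h fun _ => nofun
    obtain ⟨hψ, hψ'⟩ := mem_sfA_of_and_mem h
    rw [mem_satRun h, mem_satRun hψ, mem_satRun hψ']
    exact Iff.rfl
  · have h := mem_sfA_of_mem_cl h fun _ => nofun
    obtain ⟨hψ, hψ'⟩ := mem_sfA_of_until_mem h
    rw [mem_satRun h, mem_satRun hψ, mem_satRun hψ', Sat, until_unfold]
    tauto

theorem step_satRun (i : ℕ) : Step φ M v i (satRun M φ v i) (satRun M φ v (i + 1)) := by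
  refine ⟨⟨fun h => h.2 trivial, fun _ _ h => h.2, fun _ _ h => h.2, fun _ _ h => h.2,
    fun _ _ h => h.2⟩, fun ψ h => ?_, fun ψ ψ' h => ?_⟩
  · have h := mem_sfA_of_mem_cl h fun _ => nofun
    rw [mem_satRun h, mem_satRun (mem_sfA_of_next_mem h)]
    exact Iff.rfl
  · have h := mem_sfA_of_mem_cl h fun _ => nofun
    obtain ⟨hψ, hψ'⟩ := mem_sfA_of_until_mem h
    rw [mem_satRun h, mem_satRun h, mem_satRun hψ, mem_satRun hψ', Sat, until_unfold]
    exact Iff.rfl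

theorem isRun_satRun (h : Sat M φ v 0) : IsRun φ M v (satRun M φ v) :=
  ⟨complete_satRun, (mem_satRun (mem_sfA_self φ) 0).2 h, step_satRun⟩

theorem locallyAccepting_satRun : LocallyAccepting φ (satRun M φ v) := by
  intro ψ ψ' h N
  have h := mem_sfA_of_mem_cl h fun _ => nofun
  by_cases hN : Sat M (FOForm.until_ ψ ψ') v N
  · obtain ⟨k, hNk, hψ', -⟩ := hN
    exact ⟨k, hNk, Or.inl ((mem_satRun (mem_sfA_of_until_mem h).2 k).2 hψ')⟩
  · exact ⟨N, le_rfl, Or.inr ((neg_mem_satRun h N).2 hN)⟩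

theorem quantifiersSound_satRun : QuantifiersSound M v (satRun M φ v) :=
  fun _ => ⟨fun _ _ _ h => h.2, fun _ _ _ h => h.2⟩

end CanonicalRun

theorem exists_run_iff_sat (φ : FOForm s) (M : TStruct s D) (v : ℕ → D) :
    (∃ ρ, IsRun φ M v ρ ∧ LocallyAccepting φ ρ ∧ QuantifiersSound M v ρ) ↔
      Sat M φ v 0 :=
  ⟨fun ⟨_, hrun, hloc, hquant⟩ =>
      (hrun.mem_iff_sat hloc hquant (mem_sfA_self φ) 0).1 hrun.2.1,
    fun h => ⟨_, isRun_satRun h, locallyAccepting_satRun, quantifiersSound_satRun⟩⟩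

section Acceptance

variable {φ : FOForm s} {M : TStruct s D} {v : ℕ → D} {ρ : ℕ → Set (FOForm s)}

theorem IsRun.depthFO_lt_of_forall_mem (hrun : IsRun φ M v ρ) {i : ℕ} {p : s.UPred}
    {xs : Fin (s.arU p) → ℕ} {χ : FOForm s} (h : FOForm.forall_ p xs χ ∈ ρ i) :
    depthFO χ < depthFO φ :=
  depthFO_lt_of_forall_mem_sfA (mem_sfA_of_mem_cl ((hrun.1 i).1 h) fun _ => nofun)

theorem IsRun.depthFO_lt_of_neg_forall_mem (hrun : IsRun φ M v ρ) {i : ℕ} {p : s.UPred}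
    {xs : Fin (s.arU p) → ℕ} {χ : FOForm s}
    (h : FOForm.neg (FOForm.forall_ p xs χ) ∈ ρ i) : depthFO χ < depthFO φ :=
  depthFO_lt_of_forall_mem_sfA (mem_sfA_of_neg_mem_cl ((hrun.1 i).1 h))

theorem acceptingAux_zero_iff (hφ : depthFO φ = 0) :
    AcceptingAux 0 M φ v ρ ↔
      IsRun φ M v ρ ∧ LocallyAccepting φ ρ ∧ QuantifiersSound M v ρ :=
  ⟨fun ⟨hrun, hloc⟩ => ⟨hrun, hloc, fun _ =>
      ⟨fun _ _ _ h => absurd (hrun.depthFO_lt_of_forall_mem h) (by omega),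
        fun _ _ _ h => absurd (hrun.depthFO_lt_of_neg_forall_mem h) (by omega)⟩⟩,
    fun ⟨hrun, hloc, _⟩ => ⟨hrun, hloc⟩⟩

theorem acceptingAux_succ_iff {n : ℕ}
    (ih : ∀ χ : FOForm s, depthFO χ ≤ n → ∀ (M : TStruct s D) (v : ℕ → D),
      (∃ ρ, AcceptingAux n M χ v ρ) ↔ Sat M χ v 0)
    (hφ : depthFO φ ≤ n + 1) :
    AcceptingAux (n + 1) M φ v ρ ↔
      IsRun φ M v ρ ∧ LocallyAccepting φ ρ ∧ QuantifiersSound M v ρ := by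
  refine and_congr_right fun hrun => and_congr_right fun _ =>
    forall_congr' fun i => and_congr ?_ ?_
  · refine forall₃_congr fun p xs χ => forall_congr' fun h => ?_
    have hχ : depthFO χ ≤ n := by have := hrun.depthFO_lt_of_forall_mem h; omega
    simp only [ih χ hχ, sat_shift_zero, Sat]
  · refine forall₃_congr fun p xs χ => forall_congr' fun h => ?_
    have hχ : depthFO χ ≤ n := by have := hrun.depthFO_lt_of_neg_forall_mem h; omega
    simp only [ih (FOForm.neg χ) hχ, Sat, sat_shift_zero, not_forall, exists_prop]

theorem exists_acceptingAux_iff_sat (n : ℕ) (φ : FOForm s) (hφ : depthFO φ ≤ n)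
    (M : TStruct s D) (v : ℕ → D) : (∃ ρ, AcceptingAux n M φ v ρ) ↔ Sat M φ v 0 := by
  induction n generalizing φ M v with
  | zero => simp only [acceptingAux_zero_iff (Nat.le_zero.1 hφ), exists_run_iff_sat]
  | succ n ih => simp only [acceptingAux_succ_iff ih hφ, exists_run_iff_sat]

end Acceptance

theorem spawning_automaton_correct_general {s : Sig} {D : Type}
    (φ : FOForm s)
    (M : TStruct s D) (v : ℕ → D) :
    (∃ ρ : ℕ → Set (FOForm s), Accepting M φ v ρ) ↔ Sat M φ v 0 :=
  exists_acceptingAux_iff_sat _ φ le_rfl M v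

/-- Correctness of the spawning automaton construction: for every
LTL^FO sentence `φ`, `L(A_φ) = L(φ)`, i.e. the constructed spawning automaton `A_φ`
has an accepting run over a first-order temporal structure `(𝔄̄, w)` (with `w` an
infinite trace of events) iff `(𝔄̄, w) ⊨ φ`. -/
theorem spawning_automaton_correct {s : Sig} {D : Type}
    (φ : FOForm s) (hφ : FOForm.Closed φ)
    (M : TStruct s D) (v : ℕ → D) :
    (∃ ρ : ℕ → Set (FOForm s), Accepting M φ v ρ) ↔ Sat M φ v 0 :=
  spawning_automaton_correct_general φ M v

end LTLFO
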